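/- arXiv:1105.1763 — 8 statements merged into one kernel-verified Lean document; each statement's English description precedes it below -/
import Mathlib

section
/- For α ∈ ℂ, let F_α(z) = (αz³ + 3z² + 2α)/(2z³ + 3αz + 1). Then for every α, the points 1, ω, ω̄ (the cube roots of unity) are critical points of F_α, and F_α(1)=1, F_α(ω)=ω̄, F_α(ω̄)=ω. -/
/-!
Both the Wronskian `N'D - ND'` of `F_α = N/D` and `N - z²D` are polynomial multiples of `z³ - 1`,
so they vanish at the cube roots of unity; there `z² = z̄`, which swaps `ω` and `ω̄` and fixes `1`.
-/

open Complex

section CommRing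

variable {R : Type*} [CommRing R] {x : R}

theorem pow_three_eq_one_of_sq_add_self_add_one (h : x ^ 2 + x + 1 = 0) : x ^ 3 = 1 := by
  linear_combination (x - 1) * h

theorem sq_eq_neg_one_sub_of_sq_add_self_add_one (h : x ^ 2 + x + 1 = 0) : x ^ 2 = -1 - x := by
  linear_combination h

theorem neg_one_sub_sq_add_self_add_one (h : x ^ 2 + x + 1 = 0) :
    (-1 - x) ^ 2 + (-1 - x) + 1 = 0 := by
  linear_combination h

theorem cubic_wronskian_eq (α z : R) :
    (3 * α * z ^ 2 + 6 * z) * (2 * z ^ 3 + 3 * α * z + 1)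
      - (α * z ^ 3 + 3 * z ^ 2 + 2 * α) * (6 * z ^ 2 + 3 * α) = 6 * (α ^ 2 - z) * (z ^ 3 - 1) := by
  ring

theorem cubic_num_eq_sq_mul_den (α : R) {z : R} (hz : z ^ 3 = 1) :
    α * z ^ 3 + 3 * z ^ 2 + 2 * α = z ^ 2 * (2 * z ^ 3 + 3 * α * z + 1) := by
  linear_combination (-2 * (α + z ^ 2)) * hz

end CommRing

theorem sq_add_self_add_one_eq_zero_of_eq_omega {ω : ℂ} (hω : ω = -1/2 + I * Real.sqrt 3 / 2) :
    ω ^ 2 + ω + 1 = 0 := by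
  have hsq : (I * Real.sqrt 3) ^ 2 = -3 := by
    rw [mul_pow, I_sq, ← ofReal_pow, Real.sq_sqrt (by norm_num : (0 : ℝ) ≤ 3)]
    push_cast
    ring
  rw [hω]
  linear_combination hsq / 4

section CubicMap

variable {𝕜 : Type*} [NontriviallyNormedField 𝕜]

theorem hasDerivAt_cubic_num (α z : 𝕜) :
    HasDerivAt (fun z => α * z ^ 3 + 3 * z ^ 2 + 2 * α) (3 * α * z ^ 2 + 6 * z) z :=
  (((hasDerivAt_pow 3 z).const_mul α).add ((hasDerivAt_pow 2 z).const_mul 3)).add_const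
    (2 * α) |>.congr_deriv (by push_cast; ring)

theorem hasDerivAt_cubic_den (α z : 𝕜) :
    HasDerivAt (fun z => 2 * z ^ 3 + 3 * α * z + 1) (6 * z ^ 2 + 3 * α) z :=
  (((hasDerivAt_pow 3 z).const_mul 2).add ((hasDerivAt_id z).const_mul (3 * α))).add_const
    1 |>.congr_deriv (by push_cast; ring)

end CubicMap

theorem stmt_2 (ω ωb : ℂ) (hω : ω = -1/2 + I * (Real.sqrt 3) / 2)
    (hωb : ωb = -1/2 - I * (Real.sqrt 3) / 2)
    (N D : ℂ → ℂ → ℂ)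
    (hN : ∀ α z, N α z = α * z ^ 3 + 3 * z ^ 2 + 2 * α)
    (hD : ∀ α z, D α z = 2 * z ^ 3 + 3 * α * z + 1) :
    ∀ α : ℂ,
      (∀ z ∈ ({1, ω, ωb} : Set ℂ),
        deriv (N α) z * D α z - N α z * deriv (D α) z = 0) ∧
      N α 1 = D α 1 ∧ N α ω = ωb * D α ω ∧ N α ωb = ω * D α ωb := by
  have hωb_eq : ωb = -1 - ω := by rw [hωb, hω]; ring
  have hω_quad := sq_add_self_add_one_eq_zero_of_eq_omega hω
  have hωb_quad : ωb ^ 2 + ωb + 1 = 0 := hωb_eq ▸ neg_one_sub_sq_add_self_add_one hω_quad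
  have hω_sq : ω ^ 2 = ωb := hωb_eq ▸ sq_eq_neg_one_sub_of_sq_add_self_add_one hω_quad
  have hωb_sq : ωb ^ 2 = ω := by
    rw [sq_eq_neg_one_sub_of_sq_add_self_add_one hωb_quad, hωb_eq]; ring
  have hcube : ∀ z ∈ ({1, ω, ωb} : Set ℂ), z ^ 3 = 1 := by
    rintro z (rfl | rfl | rfl)
    · exact one_pow 3
    · exact pow_three_eq_one_of_sq_add_self_add_one hω_quad
    · exact pow_three_eq_one_of_sq_add_self_add_one hωb_quad
  intro α
  have hNα : N α = fun z => α * z ^ 3 + 3 * z ^ 2 + 2 * α := funext (hN α)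
  have hDα : D α = fun z => 2 * z ^ 3 + 3 * α * z + 1 := funext (hD α)
  refine ⟨fun z hz => ?_, ?_, ?_, ?_⟩
  · rw [hNα, hDα, (hasDerivAt_cubic_num α z).deriv, (hasDerivAt_cubic_den α z).deriv,
      cubic_wronskian_eq, hcube z hz, sub_self, mul_zero]
  · rw [hN, hD, cubic_num_eq_sq_mul_den α (one_pow 3), one_pow, one_mul]
  · rw [hN, hD, cubic_num_eq_sq_mul_den α (hcube ω (by simp)), hω_sq]
  · rw [hN, hD, cubic_num_eq_sq_mul_den α (hcube ωb (by simp)), hωb_sq]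
end

section
/- For α ∈ ℂ with 2α³ + 1 ≠ 0, the fourth critical point of F_α(z) = (αz³ + 3z² + 2α)/(2z³ + 3αz + 1) (besides 1, ω, ω̄) is α², and the corresponding critical value is F_α(α²) = α(α³+2)/(2α³+1). -/
/-!
By the quotient rule the critical points of `F_α = N/D` are the zeros of `N' D - N D'`, a
polynomial that factors as `-6 (z³ - 1)(z - α²)`; the cube roots of unity are
`1, -1/2 ± i√3/2`. The critical value is a direct evaluation.
-/

open Complex

lemma cube_sub_one_eq_mul (z : ℂ) :
    z ^ 3 - 1 = (z - 1) * (z - (-1/2 + I * Real.sqrt 3 / 2)) * (z - (-1/2 - I * Real.sqrt 3 / 2)) := by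
  have hsqrt : (Real.sqrt 3 : ℂ) ^ 2 = 3 := by
    rw [← ofReal_pow, Real.sq_sqrt (by norm_num : (0 : ℝ) ≤ 3)]
    norm_num
  linear_combination (1 - z) / 4 * hsqrt + (z - 1) * (Real.sqrt 3 : ℂ) ^ 2 / 4 * I_sq

lemma pow_three_eq_one_iff (z : ℂ) :
    z ^ 3 = 1 ↔ z = 1 ∨ z = -1/2 + I * Real.sqrt 3 / 2 ∨ z = -1/2 - I * Real.sqrt 3 / 2 := by
  rw [← sub_eq_zero, cube_sub_one_eq_mul]
  simp only [mul_eq_zero, sub_eq_zero, or_assoc]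

lemma hasDerivAt_cubic {𝕜 : Type*} [NontriviallyNormedField 𝕜] (a b c d z : 𝕜) :
    HasDerivAt (fun z => a * z ^ 3 + b * z ^ 2 + c * z + d) (3 * a * z ^ 2 + 2 * b * z + c) z := by
  have h := ((((hasDerivAt_pow 3 z).const_mul a).add ((hasDerivAt_pow 2 z).const_mul b)).add
    ((hasDerivAt_id' z).const_mul c)).add_const d
  exact h.congr_deriv (by norm_num; ring)

lemma wronskian_eq (α z : ℂ) :
    (3 * α * z ^ 2 + 6 * z) * (2 * z ^ 3 + 3 * α * z + 1)
      - (α * z ^ 3 + 3 * z ^ 2 + 2 * α) * (6 * z ^ 2 + 3 * α) = -6 * (z ^ 3 - 1) * (z - α ^ 2) := by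
  ring

theorem stmt_3 (ω ωb : ℂ) (hω : ω = -1/2 + I * (Real.sqrt 3) / 2)
    (hωb : ωb = -1/2 - I * (Real.sqrt 3) / 2)
    (N D : ℂ → ℂ → ℂ)
    (hN : ∀ α z, N α z = α * z ^ 3 + 3 * z ^ 2 + 2 * α)
    (hD : ∀ α z, D α z = 2 * z ^ 3 + 3 * α * z + 1) :
    ∀ α : ℂ, 2 * α ^ 3 + 1 ≠ 0 →
      (∀ z : ℂ, deriv (N α) z * D α z - N α z * deriv (D α) z = 0 ↔
        z = 1 ∨ z = ω ∨ z = ωb ∨ z = α ^ 2) ∧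
      N α (α ^ 2) * (2 * α ^ 3 + 1) = α * (α ^ 3 + 2) * D α (α ^ 2) := by
  intro α _
  refine ⟨fun z => ?_, by rw [hN, hD]; ring⟩
  have hN' : deriv (N α) z = 3 * α * z ^ 2 + 6 * z := by
    have : N α = fun z => α * z ^ 3 + 3 * z ^ 2 + 0 * z + 2 * α := funext fun w => by rw [hN]; ring
    rw [this, (hasDerivAt_cubic α 3 0 (2 * α) z).deriv]
    ring
  have hD' : deriv (D α) z = 6 * z ^ 2 + 3 * α := by
    have : D α = fun z => 2 * z ^ 3 + 0 * z ^ 2 + 3 * α * z + 1 := funext fun w => by rw [hD]; ring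
    rw [this, (hasDerivAt_cubic 2 0 (3 * α) 1 z).deriv]
    ring
  rw [hN', hD', hN, hD, wronskian_eq, hω, hωb]
  simp only [mul_eq_zero, sub_eq_zero, pow_three_eq_one_iff, or_assoc,
    or_iff_right (show (-6 : ℂ) ≠ 0 by norm_num)]
end

section
/- Let Y(α) = α(α³+2)/(2α³+1), viewed as a degree 4 rational map of the Riemann sphere. Then the critical values of Y are exactly 1, ω, and ω̄ (the cube roots of unity), and Y⁻¹({1, ω, ω̄}) = {1, ω, ω̄, -1, -ω, -ω̄} (the sixth roots of unity). -/
/-!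
The derivative of `Y z = z (z³ + 2) / (2 z³ + 1)` is `2 (z³ - 1)² / (2 z³ + 1)²`,
so the finite critical points are the cube roots of unity `ζ`, each fixed by `Y`. For such `ζ` one
has the factorisation `z (z³ + 2) - ζ (2 z³ + 1) = (z - ζ)³ (z + ζ)`, so `Y z = ζ` exactly when
`z = ζ` (with multiplicity three, whence criticality) or `z = -ζ`.
-/

open Complex

section Field

variable {K : Type*} [Field K]

theorem cube_eq_one_iff {ω ωb z : K} (hω : ω ^ 2 + ω + 1 = 0) (hωb : ω + ωb = -1) :
    z ^ 3 = 1 ↔ z = 1 ∨ z = ω ∨ z = ωb := by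
  have hfac : z ^ 3 - 1 = (z - 1) * ((z - ω) * (z - ωb)) := by
    rw [eq_sub_of_add_eq' hωb]
    linear_combination (z - 1) * hω
  rw [← sub_eq_zero, hfac]
  simp only [mul_eq_zero, sub_eq_zero]

theorem quartic_eq_iff_of_cube_eq_one {ζ z : K} (h3 : (3 : K) ≠ 0) (hζ : ζ ^ 3 = 1) :
    z * (z ^ 3 + 2) / (2 * z ^ 3 + 1) = ζ ↔ z = ζ ∨ z = -ζ := by
  have hζ0 : ζ ≠ 0 := by rintro rfl; simp at hζ
  by_cases hd : 2 * z ^ 3 + 1 = 0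
  · have hz : z ≠ ζ ∧ z ≠ -ζ := by
      constructor <;> rintro rfl
      · exact h3 (by linear_combination hd - 2 * hζ)
      · exact one_ne_zero (α := K) (by linear_combination -hd - 2 * hζ)
    simpa [hd, hz] using hζ0.symm
  · have hfac : z * (z ^ 3 + 2) - ζ * (2 * z ^ 3 + 1) = (z - ζ) ^ 3 * (z + ζ) := by
      linear_combination (ζ - 2 * z) * hζ
    rw [div_eq_iff hd, ← sub_eq_zero, hfac, mul_eq_zero, pow_eq_zero_iff three_ne_zero,
      sub_eq_zero, add_eq_zero_iff_eq_neg]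

end Field

theorem hasDerivAt_quartic {𝕜 : Type*} [NontriviallyNormedField 𝕜] {z : 𝕜}
    (hz : 2 * z ^ 3 + 1 ≠ 0) :
    HasDerivAt (fun α : 𝕜 => α * (α ^ 3 + 2) / (2 * α ^ 3 + 1))
      (2 * (z ^ 3 - 1) ^ 2 / (2 * z ^ 3 + 1) ^ 2) z := by
  have hnum : HasDerivAt (fun α : 𝕜 => α * (α ^ 3 + 2)) (1 * (z ^ 3 + 2) + z * (3 * z ^ 2)) z :=
    (hasDerivAt_id z).mul (by simpa using (hasDerivAt_pow 3 z).add_const (2 : 𝕜))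
  have hden : HasDerivAt (fun α : 𝕜 => 2 * α ^ 3 + 1) (2 * (3 * z ^ 2)) z := by
    simpa using ((hasDerivAt_pow 3 z).const_mul (2 : 𝕜)).add_const (1 : 𝕜)
  refine (hnum.div hden hz).congr_deriv ?_
  ring

theorem quartic_critical_iff {𝕜 : Type*} [NontriviallyNormedField 𝕜] [CharZero 𝕜] {z : 𝕜} :
    (2 * z ^ 3 + 1 ≠ 0 ∧ deriv (fun α : 𝕜 => α * (α ^ 3 + 2) / (2 * α ^ 3 + 1)) z = 0) ↔
      z ^ 3 = 1 := by
  constructor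
  · rintro ⟨hz, hcrit⟩
    rw [(hasDerivAt_quartic hz).deriv] at hcrit
    simpa [hz, sub_eq_zero] using hcrit
  · intro hz
    have hd : 2 * z ^ 3 + 1 ≠ 0 := by rw [hz]; norm_num
    refine ⟨hd, ?_⟩
    rw [(hasDerivAt_quartic hd).deriv, hz]
    simp

theorem sq_add_self_add_one_eq_zero_of_eq {ω : ℂ} (hω : ω = -1/2 + I * (Real.sqrt 3) / 2) :
    ω ^ 2 + ω + 1 = 0 := by
  have hs : ((Real.sqrt 3 : ℝ) : ℂ) ^ 2 = 3 := by
    norm_cast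
    exact Real.sq_sqrt (by norm_num)
  rw [hω]
  linear_combination ((Real.sqrt 3 : ℂ) ^ 2 / 4) * I_sq - (1/4) * hs

theorem stmt_5 (Y : ℂ → ℂ) (hY : ∀ α, Y α = α * (α ^ 3 + 2) / (2 * α ^ 3 + 1))
    (ω ωb : ℂ) (hω : ω = -1/2 + I * (Real.sqrt 3) / 2)
    (hωb : ωb = -1/2 - I * (Real.sqrt 3) / 2) :
    {w : ℂ | ∃ z : ℂ, 2 * z ^ 3 + 1 ≠ 0 ∧ deriv Y z = 0 ∧ Y z = w} = {1, ω, ωb} ∧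
    Y ⁻¹' {1, ω, ωb} = {1, ω, ωb, -1, -ω, -ωb} := by
  obtain rfl : Y = fun α => α * (α ^ 3 + 2) / (2 * α ^ 3 + 1) := funext hY
  have hroots (z : ℂ) : z ^ 3 = 1 ↔ z = 1 ∨ z = ω ∨ z = ωb :=
    cube_eq_one_iff (sq_add_self_add_one_eq_zero_of_eq hω) (by rw [hω, hωb]; ring)
  have h3 : (3 : ℂ) ≠ 0 := three_ne_zero
  have hfix {z : ℂ} (hz : z ^ 3 = 1) : z * (z ^ 3 + 2) / (2 * z ^ 3 + 1) = z :=
    (quartic_eq_iff_of_cube_eq_one h3 hz).2 (Or.inl rfl)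
  constructor
  · ext w
    simp only [Set.mem_ofPred_eq, Set.mem_insert_iff, Set.mem_singleton_iff, ← hroots]
    constructor
    · rintro ⟨z, hz, hcrit, rfl⟩
      have hz3 := quartic_critical_iff.1 ⟨hz, hcrit⟩
      rwa [hfix hz3]
    · intro hw
      obtain ⟨hd, hcrit⟩ := quartic_critical_iff.2 hw
      exact ⟨w, hd, hcrit, hfix hw⟩
  · ext z
    simp only [Set.mem_preimage, Set.mem_insert_iff, Set.mem_singleton_iff]
    rw [quartic_eq_iff_of_cube_eq_one h3 (one_pow 3),
      quartic_eq_iff_of_cube_eq_one h3 ((hroots ω).2 (Or.inr (Or.inl rfl))),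
      quartic_eq_iff_of_cube_eq_one h3 ((hroots ωb).2 (Or.inr (Or.inr rfl)))]
    tauto
end

section
/- Let f(z) = 2i(z² - (1+i)/2)². Then the postcritical set of f (as a map of ℙ¹) is {0, 1, -1, ∞}. In particular, f maps both square roots of (1+i)/2 to 0, maps 0 to -1, maps -1 to 1, and fixes 1 and ∞. -/
open Complex OnePoint Function Set

/-!
Iterating `f` from the critical points `±c`, `0`, `∞` gives `±c ↦ 0 ↦ -1 ↦ 1 ↦ 1` and `∞ ↦ ∞`,
so `{0, 1, -1, ∞}` is forward invariant, receives the critical points after one step,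
and every one of its points is actually reached.
-/

theorem Set.MapsTo.iterate_succ_of_mapsTo {α : Type*} {f : α → α} {s t : Set α}
    (hs : MapsTo f s t) (ht : MapsTo f t t) (n : ℕ) : MapsTo f^[n + 1] s t := by
  rw [iterate_succ]
  exact (ht.iterate n).comp hs

theorem iUnion_iterate_image_subset_of_mapsTo {α : Type*} {f : α → α} {s t : Set α}
    (hs : MapsTo f s t) (ht : MapsTo f t t) :
    ⋃ (k : ℕ) (_ : 1 ≤ k), f^[k] '' s ⊆ t := by
  refine iUnion₂_subset fun k hk => ?_
  obtain ⟨n, rfl⟩ := Nat.exists_eq_add_of_le' hk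
  exact (hs.iterate_succ_of_mapsTo ht n).image_subset

theorem mem_iUnion_iterate_image_of_iterate_eq {α : Type*} {f : α → α} {s : Set α} {k : ℕ}
    {x y : α} (hk : 1 ≤ k) (hy : y ∈ s) (hx : f^[k] y = x) :
    x ∈ ⋃ (k : ℕ) (_ : 1 ≤ k), f^[k] '' s :=
  mem_iUnion₂_of_mem hk ⟨y, hy, hx⟩

theorem stmt_9 (f : ℂ → ℂ)
    (hf : ∀ z, f z = 2 * I * (z ^ 2 - (1 + I) / 2) ^ 2)
    (c : ℂ) (hc : c ^ 2 = (1 + I) / 2)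
    (F : OnePoint ℂ → OnePoint ℂ)
    (hF1 : F ∞ = ∞) (hF2 : ∀ z : ℂ, F (z : OnePoint ℂ) = ((f z : ℂ) : OnePoint ℂ)) :
    f c = 0 ∧ f (-c) = 0 ∧ f 0 = -1 ∧ f (-1) = 1 ∧ f 1 = 1 ∧
    (⋃ (k : ℕ) (_ : 1 ≤ k),
        F^[k] '' ({((0 : ℂ) : OnePoint ℂ), ((c : ℂ) : OnePoint ℂ),
          ((-c : ℂ) : OnePoint ℂ), ∞} : Set (OnePoint ℂ))) =
      {((0 : ℂ) : OnePoint ℂ), ((1 : ℂ) : OnePoint ℂ), ((-1 : ℂ) : OnePoint ℂ), ∞} := by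
  have fc : f c = 0 := by rw [hf, hc]; ring
  have fnc : f (-c) = 0 := by rw [hf, neg_sq, hc]; ring
  have f0 : f 0 = -1 := by rw [hf]; linear_combination (I / 2 + 1) * I_sq
  have fn1 : f (-1) = 1 := by rw [hf]; linear_combination (I / 2 - 1) * I_sq
  have f1 : f 1 = 1 := by rw [hf]; linear_combination (I / 2 - 1) * I_sq
  refine ⟨fc, fnc, f0, fn1, f1, Subset.antisymm ?_ ?_⟩
  · apply iUnion_iterate_image_subset_of_mapsTo
    · rintro x (rfl | rfl | rfl | rfl) <;> simp [hF1, hF2, f0, fc, fnc]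
    · rintro x (rfl | rfl | rfl | rfl) <;> simp [hF1, hF2, f0, f1, fn1]
  · have F0 : F ((0 : ℂ) : OnePoint ℂ) = ((-1 : ℂ) : OnePoint ℂ) := by rw [hF2, f0]
    rintro x (rfl | rfl | rfl | rfl)
    · exact mem_iUnion_iterate_image_of_iterate_eq (y := c) le_rfl (by simp) (by simp [hF2, fc])
    · exact mem_iUnion_iterate_image_of_iterate_eq (y := ((0 : ℂ) : OnePoint ℂ)) (k := 2)
        one_le_two (by simp) (show F (F _) = _ by rw [F0, hF2, fn1])
    · exact mem_iUnion_iterate_image_of_iterate_eq le_rfl (by simp) F0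
    · exact mem_iUnion_iterate_image_of_iterate_eq le_rfl (by simp) hF1
end

section
/- For n ≥ 2, let f(z) = g(zⁿ) where g(z) = ((n+1)z - z^{n+1})/n, i.e., f(z) = ((n+1)zⁿ - z^{n(n+1)})/n. Then the set A = {0, ∞} ∪ {n-th roots of unity} satisfies f(A) ⊆ A, every critical value of f lies in A, and the postcritical set of f equals A; in particular |P_f| = n + 2. -/
/-!
Writing `f = g ∘ (· ^ n)`, one computes `f' z = (n + 1) z^(n-1) (1 - z^(n²))`, so the finite
critical points are `0` and the `n²`-th roots of unity. On the latter `f z = z ^ n`, which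
ranges over all `n`-th roots of unity; together with the fixed points `0` and `∞` these are the
critical values. The set `A` of critical values is forward invariant (`f` sends every `n`-th root
of unity to `1`), so the postcritical set is `A` itself.
-/

open Set

open OnePoint

noncomputable def powerComp (n : ℕ) (z : ℂ) : ℂ := ((n + 1) * z ^ n - z ^ (n * (n + 1))) / n

theorem hasDerivAt_powerComp {n : ℕ} (hn : n ≠ 0) (z : ℂ) :
    HasDerivAt (powerComp n) ((n + 1) * z ^ (n - 1) * (1 - z ^ (n * n))) z := by
  obtain ⟨m, rfl⟩ := Nat.exists_eq_add_one_of_ne_zero hn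
  have hexp : (m + 1) * (m + 1 + 1) - 1 = m + (m + 1) * (m + 1) :=
    Nat.sub_eq_of_eq_add (by ring)
  refine ((((hasDerivAt_pow (m + 1) z).const_mul ((m + 1 : ℕ) + 1 : ℂ)).sub
    (hasDerivAt_pow ((m + 1) * (m + 1 + 1)) z)).div_const ((m + 1 : ℕ) : ℂ)).congr_deriv ?_
  rw [hexp, Nat.add_sub_cancel, pow_add]
  push_cast
  field_simp

theorem deriv_powerComp_eq_zero_iff {n : ℕ} (hn : 2 ≤ n) {z : ℂ} :
    deriv (powerComp n) z = 0 ↔ z = 0 ∨ z ^ (n * n) = 1 := by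
  rw [(hasDerivAt_powerComp (by omega) z).deriv, mul_eq_zero, mul_eq_zero, sub_eq_zero,
    pow_eq_zero_iff (by omega), eq_comm (a := (1 : ℂ))]
  have : (n + 1 : ℂ) ≠ 0 := by exact_mod_cast n.succ_ne_zero
  simp [this]

theorem powerComp_zero {n : ℕ} (hn : n ≠ 0) : powerComp n 0 = 0 := by
  simp [powerComp, hn]

theorem eqOn_powerComp_pow {n : ℕ} (hn : n ≠ 0) :
    EqOn (powerComp n) (· ^ n) {z | z ^ (n * n) = 1} := by
  intro z (hz : z ^ (n * n) = 1)
  have : (n : ℂ) ≠ 0 := by exact_mod_cast hn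
  rw [powerComp, mul_add_one, pow_add, hz, one_mul]
  field_simp
  ring

theorem image_pow_setOf_pow_mul_eq_one {K : Type*} [Field K] [IsAlgClosed K] {n : ℕ}
    (hn : n ≠ 0) (m : ℕ) : (· ^ n) '' {z : K | z ^ (n * m) = 1} = {z | z ^ m = 1} := by
  ext w
  constructor
  · rintro ⟨z, hz, rfl⟩
    rwa [mem_ofPred_eq, ← pow_mul]
  · intro (hw : w ^ m = 1)
    obtain ⟨z, rfl⟩ := IsAlgClosed.exists_pow_nat_eq w (Nat.pos_of_ne_zero hn)
    exact ⟨z, by rwa [mem_ofPred_eq, pow_mul], rfl⟩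

theorem ncard_insert_zero_setOf_pow_eq_one {n : ℕ} (hn : n ≠ 0) :
    (insert 0 {z : ℂ | z ^ n = 1}).ncard = n + 1 := by
  have hroots : {z : ℂ | z ^ n = 1} = ↑(Polynomial.nthRootsFinset n (1 : ℂ)) := by
    ext z
    simp [Polynomial.mem_nthRootsFinset (Nat.pos_of_ne_zero hn)]
  rw [ncard_insert_of_notMem (by simp [zero_pow hn]) (hroots ▸ Finset.finite_toSet _), hroots,
    ncard_coe_finset, (Complex.isPrimitiveRoot_exp n hn).card_nthRootsFinset]

theorem OnePoint.ncard_insert_infty_image_coe {X : Type*} {s : Set X} (hs : s.Finite) :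
    (insert ∞ (((↑) : X → OnePoint X) '' s)).ncard = s.ncard + 1 := by
  rw [ncard_insert_of_notMem (by simp) (hs.image _),
    ncard_image_of_injective _ OnePoint.coe_injective]

theorem OnePoint.image_insert_infty_image_coe {X : Type*} {F : OnePoint X → OnePoint X}
    {f : X → X} (hF1 : F ∞ = ∞) (hF2 : ∀ x : X, F x = f x) (s : Set X) :
    F '' insert ∞ ((↑) '' s) = insert ∞ ((↑) '' (f '' s)) := by
  rw [image_insert_eq, hF1, image_image, image_image]
  simp only [hF2]

theorem iUnion_iterate_image_eq {α : Type*} {F : α → α} {s t : Set α}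
    (ht : F '' t ⊆ t) (hs : F '' s = t) : ⋃ (k : ℕ) (_ : 1 ≤ k), F^[k] '' s = t := by
  have hiter : ∀ k, F^[k + 1] '' s ⊆ t := by
    intro k
    induction k with
    | zero => simp [hs]
    | succ k ih => rw [Function.iterate_succ', image_comp]; exact (image_mono ih).trans ht
  refine subset_antisymm (iUnion₂_subset fun k hk => ?_) ?_
  · obtain ⟨k, rfl⟩ := Nat.exists_eq_add_of_le' hk
    exact hiter k
  · exact subset_iUnion₂_of_subset 1 le_rfl (by simp [hs])

theorem stmt_11 (n : ℕ) (hn : 2 ≤ n) (f : ℂ → ℂ)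
    (hf : ∀ z, f z = ((n + 1) * z ^ n - z ^ (n * (n + 1))) / n)
    (F : OnePoint ℂ → OnePoint ℂ)
    (hF1 : F ∞ = ∞) (hF2 : ∀ z : ℂ, F (z : OnePoint ℂ) = ((f z : ℂ) : OnePoint ℂ))
    (A : Set (OnePoint ℂ))
    (hA : A = {∞, ((0 : ℂ) : OnePoint ℂ)} ∪
        (fun z : ℂ => (z : OnePoint ℂ)) '' {z : ℂ | z ^ n = 1})
    (Ω : Set (OnePoint ℂ))
    (hΩ : Ω = {∞} ∪ (fun z : ℂ => (z : OnePoint ℂ)) '' {z : ℂ | deriv f z = 0}) :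
    F '' A ⊆ A ∧ F '' Ω ⊆ A ∧
    (⋃ (k : ℕ) (_ : 1 ≤ k), F^[k] '' Ω) = A ∧ A.ncard = n + 2 := by
  obtain rfl : f = powerComp n := funext hf
  have hn0 : n ≠ 0 := by omega
  have hA' : A = insert ∞ ((↑) '' insert 0 {z : ℂ | z ^ n = 1}) := by
    rw [hA, image_insert_eq, insert_union, singleton_union]
  have hΩ' : Ω = insert ∞ ((↑) '' insert 0 {z : ℂ | z ^ (n * n) = 1}) := by
    rw [hΩ, singleton_union]
    congr
    ext z
    exact deriv_powerComp_eq_zero_iff hn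
  have hroots : powerComp n '' {z | z ^ (n * n) = 1} = {z | z ^ n = 1} :=
    ((eqOn_powerComp_pow hn0).image_eq).trans (image_pow_setOf_pow_mul_eq_one hn0 n)
  have hFΩ : F '' Ω = A := by
    rw [hΩ', hA', image_insert_infty_image_coe hF1 hF2, image_insert_eq, powerComp_zero hn0,
      hroots]
  have hFA : F '' A ⊆ A := by
    rw [hA', image_insert_infty_image_coe hF1 hF2, image_insert_eq, powerComp_zero hn0]
    refine insert_subset_insert (image_mono (insert_subset_insert ?_))
    calc powerComp n '' {z | z ^ n = 1} ⊆ powerComp n '' {z | z ^ (n * n) = 1} :=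
          image_mono fun z (hz : z ^ n = 1) => by rw [mem_ofPred_eq, pow_mul, hz, one_pow]
      _ = {z | z ^ n = 1} := hroots
  refine ⟨hFA, hFΩ.subset, iUnion_iterate_image_eq hFA hFΩ, ?_⟩
  have hcard := ncard_insert_zero_setOf_pow_eq_one hn0
  rw [hA', ncard_insert_infty_image_coe (finite_of_ncard_ne_zero (by omega)), hcard]
end

section
/- Let s, g: ℙ¹ → ℙ¹ be rational maps with critical value sets V_s and V_g, let A ⊂ ℙ¹ be finite with V_s ⊆ A, and suppose V_g ∪ g(A) ⊆ s⁻¹(A). Let f = g ∘ s and B = V_g ∪ g(A). Then f(B) ⊆ B, the critical value set of f equals V_g ∪ g(V_s) ⊆ B, and the postcritical set of f satisfies V_g ∪ g(V_s) ⊆ P_f ⊆ B. In particular f is postcritically finite. -/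
/-! `s` maps `B` into `A` and `g` maps `A` into `B`, so `B` is forward invariant under `f = g ∘ s`.
Since `s` is surjective, the critical values of `f` are `V_g ∪ g(V_s)`, which lie in `B` because
`V_s ⊆ A`; hence the whole forward orbit of the critical set stays in the finite set `B`. -/

open Set Function

variable {α β γ : Type*}

def postcriticalSet (f : α → α) (Ω : Set α) : Set α :=
  ⋃ (k : ℕ) (_ : 1 ≤ k), f^[k] '' Ω

theorem image_subset_postcriticalSet (f : α → α) (Ω : Set α) :
    f '' Ω ⊆ postcriticalSet f Ω :=
  subset_biUnion_of_mem (u := fun k => f^[k] '' Ω) (le_refl 1)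

theorem postcriticalSet_subset_of_mapsTo {f : α → α} {Ω B : Set α} (hB : MapsTo f B B)
    (hΩ : f '' Ω ⊆ B) : postcriticalSet f Ω ⊆ B := by
  refine iUnion₂_subset fun k hk => ?_
  obtain ⟨n, rfl⟩ := Nat.exists_eq_add_of_le' hk
  rw [iterate_succ, image_comp]
  exact (image_mono hΩ).trans (hB.iterate n).image_subset

theorem image_comp_union_preimage {s : α → β} (hs : Surjective s) (g : β → γ)
    (Ωs : Set α) (Ωg : Set β) :
    (g ∘ s) '' (Ωs ∪ s ⁻¹' Ωg) = g '' Ωg ∪ g '' (s '' Ωs) := by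
  rw [image_union, image_comp, image_comp, image_preimage_eq _ hs, union_comm]

theorem mapsTo_comp_of_subset_preimage {s : α → β} {g : β → α} {A : Set β} {B : Set α}
    (hBA : B ⊆ s ⁻¹' A) (hAB : g '' A ⊆ B) : MapsTo (g ∘ s) B B :=
  fun _ hx => hAB (mem_image_of_mem g (hBA hx))

theorem stmt_12 (s g : OnePoint ℂ → OnePoint ℂ) (hs : Function.Surjective s)
    (Ωs Ωg Vs Vg : Set (OnePoint ℂ))
    (hVs : Vs = s '' Ωs) (hVg : Vg = g '' Ωg) (hVgfin : Vg.Finite)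
    (A : Set (OnePoint ℂ)) (hAfin : A.Finite)
    (h1 : Vs ⊆ A) (h2 : Vg ∪ g '' A ⊆ s ⁻¹' A)
    (f : OnePoint ℂ → OnePoint ℂ) (hf : f = g ∘ s)
    (Ωf : Set (OnePoint ℂ)) (hΩf : Ωf = Ωs ∪ s ⁻¹' Ωg)
    (B : Set (OnePoint ℂ)) (hB : B = Vg ∪ g '' A)
    (Pf : Set (OnePoint ℂ)) (hPf : Pf = ⋃ (k : ℕ) (_ : 1 ≤ k), f^[k] '' Ωf) :
    f '' B ⊆ B ∧ f '' Ωf = Vg ∪ g '' Vs ∧ Vg ∪ g '' Vs ⊆ B ∧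
    Vg ∪ g '' Vs ⊆ Pf ∧ Pf ⊆ B ∧ Pf.Finite := by
  subst hVs hVg hf hΩf hB
  change Pf = postcriticalSet _ _ at hPf
  have hmaps : MapsTo (g ∘ s) _ _ := mapsTo_comp_of_subset_preimage h2 subset_union_right
  have hcrit := image_comp_union_preimage hs g Ωs Ωg
  have hcritB : g '' Ωg ∪ g '' (s '' Ωs) ⊆ g '' Ωg ∪ g '' A :=
    union_subset_union_right _ (image_mono h1)
  have hPB : Pf ⊆ g '' Ωg ∪ g '' A :=
    hPf ▸ postcriticalSet_subset_of_mapsTo hmaps (hcrit ▸ hcritB)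
  refine ⟨hmaps.image_subset, hcrit, hcritB, ?_, hPB, (hVgfin.union (hAfin.image g)).subset hPB⟩
  exact hPf ▸ hcrit ▸ image_subset_postcriticalSet _ _
end

section
/- Let f be a polynomial of degree d ≥ 2 over ℂ with finite postcritical points p₀ = 0 (after normalization), p₁, …, p_{n+1}, all critical points periodic. Let m_k be the multiplicity of p_k as a critical point, ν the inverse of the induced permutation of indices, and define Q(a₁,…,a_{n+1},z) = ∫_{a_{ν(0)}}^{z} d ∏_{k=0}^{n+1} (w - a_k)^{m_k} dw (with a₀ = 0). Define G_f: ℂ^{n+1} → ℂ^{n+1} by (G_f(a))_j = Q(a₁,…,a_{n+1},a_{ν(j)}). Then G_f⁻¹({0}) = {0}. -/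
/-!
`Q a` is a polynomial `F` with `F' = d ∏ (X - a k) ^ m k`, so every critical point of
`F` is one of the `a k`, and `F` vanishes at every `a k`. A root of `F` that is a critical point has
multiplicity one more in `F` than in `F'`; counting roots with multiplicity, the distinct values
`a k` therefore number at most `deg F - deg F' = 1`, and `a 0 = 0`.
-/

open Polynomial

theorem Polynomial.derivative_surjective {K : Type*} [Field K] [CharZero K] :
    Function.Surjective (derivative : K[X] →ₗ[K] K[X]) := by
  intro p
  refine ⟨p.sum fun n c => C (c / (n + 1)) * X ^ (n + 1), ?_⟩
  rw [Polynomial.sum_def, map_sum]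
  conv_rhs => rw [← p.sum_C_mul_X_pow_eq, Polynomial.sum_def]
  refine Finset.sum_congr rfl fun i _ => ?_
  rw [derivative_C_mul_X_pow, Nat.add_sub_cancel, Nat.cast_add_one,
    div_mul_cancel₀ _ (Nat.cast_add_one_ne_zero i)]

theorem Polynomial.exists_eq_eval_of_hasDerivAt {𝕜 : Type*} [RCLike 𝕜] {f : 𝕜 → 𝕜} {p : 𝕜[X]}
    (hf : ∀ z, HasDerivAt f (p.eval z) z) : ∃ F : 𝕜[X], derivative F = p ∧ ∀ z, f z = F.eval z := by
  obtain ⟨P, hP⟩ := derivative_surjective p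
  obtain ⟨c, hc⟩ := isOpen_univ.exists_eq_add_of_deriv_eq isPreconnected_univ
    (fun z _ => (hf z).differentiableAt.differentiableWithinAt)
    (P.differentiable.differentiableOn) (fun z _ => by simp [(hf z).deriv, hP])
  exact ⟨P + C c, by simp [hP], fun z => by simpa using hc (Set.mem_univ z)⟩

theorem Polynomial.card_le_one_of_isRoot_derivative_mem {K : Type*} [Field K] [IsAlgClosed K]
    [CharZero K] {F : K[X]} {S : Finset K} (hroot : ∀ v ∈ S, F.IsRoot v)
    (hcrit : ∀ v, (derivative F).IsRoot v → v ∈ S) : S.card ≤ 1 := by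
  classical
  have hF : F ≠ 0 := by
    rintro rfl
    obtain ⟨v, hv⟩ := Infinite.exists_notMem_finset S
    exact hv (hcrit v (by simp))
  have hmult : ∀ v ∈ S, F.rootMultiplicity v = (derivative F).roots.count v + 1 := fun v hv => by
    rw [count_roots, derivative_rootMultiplicity_of_root (hroot v hv)]
    have := (rootMultiplicity_pos hF).2 (hroot v hv)
    omega
  have hS : S ⊆ F.roots.toFinset := fun v hv => by simpa [hF] using hroot v hv
  have : (derivative F).natDegree + S.card ≤ F.natDegree := calc
    _ = ∑ v ∈ S, F.rootMultiplicity v := by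
      rw [Finset.sum_congr rfl hmult, Finset.sum_add_distrib, Finset.sum_const, smul_eq_mul, mul_one,
        Multiset.sum_count_eq_card fun v hv => hcrit v (isRoot_of_mem_roots hv),
        IsAlgClosed.card_roots_eq_natDegree]
    _ ≤ ∑ v ∈ F.roots.toFinset, F.roots.count v := by
      simp_rw [count_roots]; exact Finset.sum_le_sum_of_subset hS
    _ = Multiset.card F.roots := Multiset.toFinset_sum_count_eq _
    _ ≤ F.natDegree := card_roots' F
  rw [natDegree_derivative] at this
  omega

theorem stmt_13_general (n d : ℕ) (hd : 2 ≤ d) (m : Fin (n + 2) → ℕ)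
    (ν : Equiv.Perm (Fin (n + 2)))
    (Q : (Fin (n + 2) → ℂ) → ℂ → ℂ)
    (hQ0 : ∀ a, Q a (a (ν 0)) = 0)
    (hQd : ∀ a z, HasDerivAt (Q a) ((d : ℂ) * ∏ k, (z - a k) ^ (m k)) z) :
    ∀ a : Fin (n + 2) → ℂ, a 0 = 0 →
      ((∀ j, Q a (a (ν j)) = 0) ↔ a = 0) := by
  intro a ha0
  refine ⟨fun hzero => ?_, by rintro rfl j; simpa using hQ0 0⟩
  obtain ⟨F, hF', hQF⟩ := exists_eq_eval_of_hasDerivAt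
    (p := C (d : ℂ) * ∏ k, (X - C (a k)) ^ m k) (by simpa [eval_prod] using hQd a)
  have hroot : ∀ v ∈ Finset.univ.image a, F.IsRoot v :=
    Finset.forall_mem_image.2 fun k _ => by simpa [IsRoot, ← hQF] using hzero (ν.symm k)
  have hcrit : ∀ v, (derivative F).IsRoot v → v ∈ Finset.univ.image a := by
    have hd0 : (d : ℂ) ≠ 0 := by exact_mod_cast (by omega : d ≠ 0)
    intro v hv
    obtain ⟨k, -, hk⟩ := Finset.prod_eq_zero_iff.1 <|
      (mul_eq_zero.1 (by simpa [hF', eval_prod] using hv)).resolve_left hd0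
    exact Finset.mem_image.2 ⟨k, Finset.mem_univ k, (sub_eq_zero.1 (pow_eq_zero_iff'.1 hk).1).symm⟩
  have hcard := card_le_one_of_isRoot_derivative_mem hroot hcrit
  funext k
  rw [Pi.zero_apply, ← ha0]
  exact Finset.card_le_one.1 hcard _ (Finset.mem_image_of_mem a (Finset.mem_univ k)) _
    (Finset.mem_image_of_mem a (Finset.mem_univ 0))

theorem stmt_13 (n d : ℕ) (hd : 2 ≤ d) (m : Fin (n + 2) → ℕ)
    (hm : ∑ k, m k = d - 1) (ν : Equiv.Perm (Fin (n + 2)))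
    (Q : (Fin (n + 2) → ℂ) → ℂ → ℂ)
    (hQ0 : ∀ a, Q a (a (ν 0)) = 0)
    (hQd : ∀ a z, HasDerivAt (Q a) ((d : ℂ) * ∏ k, (z - a k) ^ (m k)) z) :
    ∀ a : Fin (n + 2) → ℂ, a 0 = 0 →
      ((∀ j, Q a (a (ν j)) = 0) ↔ a = 0) :=
  stmt_13_general n d hd m ν Q hQ0 hQd
end

section
/- With notation as in the definition of G_f (polynomial f of degree d with all critical points periodic, Q(a,z) = ∫_{a_{ν(0)}}^z d∏_{k=0}^{n+1}(w-a_k)^{m_k} dw, a₀ = 0, G_j = Q(a, a_{ν(j)}), G₀ = 0, μ = ν⁻¹): for all 0 ≤ i < j ≤ n+1, the polynomial G_{μ(j)} - G_{μ(i)} ∈ ℂ[a₁,…,a_{n+1}] is divisible by (a_j - a_i)^{m_i + m_j + 1}. -/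
/-! Substituting `w = a + t (b - a)` turns `S(b) - S(a)` into `T(1) - T(0)` with
`T = S(a + t (b - a))`. Its derivative `(b - a) · S'(a + t (b - a))` is divisible by
`(b - a)^(p + q + 1)` whenever `(w - a)^p (w - b)^q ∣ S'`, because `w - a` and `w - b` become
`(b - a) t` and `(b - a)(t - 1)`. Over a `ℚ`-algebra, divisibility of all coefficients of `T'`
passes to the coefficients of `T` in positive degree, hence to `T(1) - T(0)`. -/

open Polynomial

namespace Polynomial

variable {R : Type*} [CommRing R] [Algebra ℚ R]

theorem dvd_eval_one_sub_eval_zero_of_C_dvd_derivative {T : R[X]} {c : R}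
    (h : C c ∣ derivative T) : c ∣ T.eval 1 - T.eval 0 := by
  have hcoeff (k : ℕ) : c ∣ T.coeff (k + 1) := by
    have hunit : IsUnit ((k : R) + 1) := by
      simpa using (isUnit_iff_ne_zero.2 (Nat.cast_add_one_ne_zero k : ((k : ℚ) + 1) ≠ 0)).map
        (algebraMap ℚ R)
    have := (C_dvd_iff_dvd_coeff c _).1 h k
    rwa [coeff_derivative, hunit.dvd_mul_right] at this
  rw [eval_eq_sum_range (1 : R), ← coeff_zero_eq_eval_zero, Finset.sum_range_succ']
  simp only [one_pow, mul_one, add_sub_cancel_right]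
  exact Finset.dvd_sum fun k _ => hcoeff k

theorem pow_dvd_eval_sub_eval_of_dvd_derivative {S : R[X]} {a b : R} {p q : ℕ}
    (h : (X - C a) ^ p * (X - C b) ^ q ∣ derivative S) :
    (b - a) ^ (p + q + 1) ∣ S.eval b - S.eval a := by
  set line : R[X] := C a + C (b - a) * X
  have hline_a : (X - C a).comp line = C (b - a) * X := by simp [line]
  have hline_b : (X - C b).comp line = C (b - a) * (X - 1) := by
    simp only [line, sub_comp, X_comp, C_comp, map_sub]; ring
  have hderiv : derivative (S.comp line) = C (b - a) * (derivative S).comp line := by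
    rw [derivative_comp]; simp [line]
  have hdvd : C ((b - a) ^ (p + q + 1)) ∣ derivative (S.comp line) := by
    obtain ⟨r, hr⟩ := h
    refine ⟨X ^ p * (X - 1) ^ q * r.comp line, ?_⟩
    rw [hderiv, hr, mul_comp, mul_comp, pow_comp, pow_comp, hline_a, hline_b,
      mul_pow, mul_pow, map_pow]; ring
  have hends := dvd_eval_one_sub_eval_zero_of_C_dvd_derivative hdvd
  simpa [line, eval_comp] using hends

end Polynomial

theorem stmt_15_general (n d : ℕ) (m : Fin (n + 2) → ℕ)
    (x : Fin (n + 2) → MvPolynomial (Fin (n + 2)) ℂ)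
    (S : Polynomial (MvPolynomial (Fin (n + 2)) ℂ))
    (hS : Polynomial.derivative S =
      (d : Polynomial (MvPolynomial (Fin (n + 2)) ℂ)) *
        ∏ k, (Polynomial.X - Polynomial.C (x k)) ^ (m k)) :
    ∀ i j : Fin (n + 2), i < j →
      (x j - x i) ^ (m i + m j + 1) ∣
        (Polynomial.eval (x j) S - Polynomial.eval (x i) S) := by
  intro i j hij
  apply pow_dvd_eval_sub_eval_of_dvd_derivative
  rw [hS, ← Finset.prod_pair (f := fun k => (X - C (x k)) ^ m k) hij.ne]
  exact dvd_mul_of_dvd_right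
    (Finset.prod_dvd_prod_of_subset _ _ _ (Finset.subset_univ _)) _

theorem stmt_15 (n d : ℕ) (hd : 2 ≤ d) (m : Fin (n + 2) → ℕ)
    (hm : ∑ k, m k = d - 1)
    (x : Fin (n + 2) → MvPolynomial (Fin (n + 2)) ℂ)
    (hx0 : x 0 = 0) (hx : ∀ k, k ≠ 0 → x k = MvPolynomial.X k)
    (S : Polynomial (MvPolynomial (Fin (n + 2)) ℂ))
    (hS : Polynomial.derivative S =
      (d : Polynomial (MvPolynomial (Fin (n + 2)) ℂ)) *
        ∏ k, (Polynomial.X - Polynomial.C (x k)) ^ (m k)) :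
    ∀ i j : Fin (n + 2), i < j →
      (x j - x i) ^ (m i + m j + 1) ∣
        (Polynomial.eval (x j) S - Polynomial.eval (x i) S) :=
  stmt_15_general n d m x S hS
end
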